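/- arXiv:2007.05447 — 3 statements merged into one kernel-verified Lean document; each statement's English description precedes it below -/
import Mathlib

section
/- Let U ⊆ Δ(X×Y) be a convex and compact uncertainty set, let h^U be a classification rule minimizing h ↦ max_{p ∈ U} ℓ(h,p) over T(X,Y), and suppose the true underlying distribution p* ∈ Δ(X×Y) satisfies p* ∈ U. Then min_{h ∈ T(X,Y)} ℓ(h,p*) ≤ H_ℓ(U) and ℓ(h^U, p*) ≤ H_ℓ(U). If in addition p* maximizes H_ℓ over U, then min_{h ∈ T(X,Y)} ℓ(h,p*) = ℓ(h^U, p*) = H_ℓ(U). -/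
open scoped BigOperators Classical

noncomputable section

/-- The probability simplex on a finite type `Z`. -/
def probSimplex (Z : Type*) [Fintype Z] : Set (Z → ℝ) :=
  {p | (∀ z, 0 ≤ p z) ∧ ∑ z, p z = 1}

/-- Classification rules: maps assigning to each instance a distribution over labels. -/
def ruleSet (X Y : Type*) [Fintype Y] : Set (X → Y → ℝ) :=
  {h | ∀ x, h x ∈ probSimplex Y}

/-- Expected loss `ℓ(h,p) = ∑_{x,y} p(x,y) · L(h(·|x), y)`. -/
def expLoss {X Y : Type*} [Fintype X] [Fintype Y]
    (L : (Y → ℝ) → Y → EReal) (h : X → Y → ℝ) (p : X × Y → ℝ) : EReal :=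
  ∑ z : X × Y, (p z : EReal) * L (h z.1) z.2

/-- Generalized entropy `H_ℓ(p) = inf over rules h of ℓ(h,p)`. -/
def entropyFn {X Y : Type*} [Fintype X] [Fintype Y]
    (L : (Y → ℝ) → Y → EReal) (p : X × Y → ℝ) : EReal :=
  ⨅ h ∈ ruleSet X Y, expLoss L h p

/-- Maximum entropy over an uncertainty set `U`. -/
def maxEntropy {X Y : Type*} [Fintype X] [Fintype Y]
    (L : (Y → ℝ) → Y → EReal) (U : Set (X × Y → ℝ)) : EReal :=
  ⨆ p ∈ U, entropyFn L p

/-- Convexity of the score function in its first argument. -/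
def ConvexInFirst {Y : Type*} [Fintype Y] (L : (Y → ℝ) → Y → EReal) : Prop :=
  ∀ (y : Y) (q₁ q₂ : Y → ℝ), q₁ ∈ probSimplex Y → q₂ ∈ probSimplex Y →
    ∀ t : ℝ, 0 ≤ t → t ≤ 1 →
      L (t • q₁ + (1 - t) • q₂) y ≤ (t : EReal) * L q₁ y + ((1 - t : ℝ) : EReal) * L q₂ y

/-- Uncertainty set `U^{a,b}` given by interval expectations' constraints. -/
def uncertainty {X Y : Type*} [Fintype X] [Fintype Y] {m : ℕ}
    (Φ : X × Y → Fin m → ℝ) (a b : Fin m → ℝ) : Set (X × Y → ℝ) :=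
  {p | p ∈ probSimplex (X × Y) ∧
    ∀ i, a i ≤ (∑ z, p z * Φ z i) ∧ (∑ z, p z * Φ z i) ≤ b i}

/-- Uncertainty set `U^{a}` given by exact expectations' constraints. -/
def uncertaintyEq {X Y : Type*} [Fintype X] [Fintype Y] {m : ℕ}
    (Φ : X × Y → Fin m → ℝ) (a : Fin m → ℝ) : Set (X × Y → ℝ) :=
  {p | p ∈ probSimplex (X × Y) ∧ ∀ i, (∑ z, p z * Φ z i) = a i}

/-- The convex set `𝓛` associated with the score function `L`. -/
def LsetOf {Y : Type*} [Fintype Y] (L : (Y → ℝ) → Y → EReal) : Set (Y → ℝ) :=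
  {c | ∃ q ∈ probSimplex Y, ∀ y, (c y : EReal) + L q y ≤ 0}

/-- The function `φ_ℓ(μ, x)`. -/
def phiFn {X Y : Type*} [Fintype Y] {m : ℕ}
    (L : (Y → ℝ) → Y → EReal) (Φ : X × Y → Fin m → ℝ) (μ : Fin m → ℝ) (x : X) : ℝ :=
  sSup {ν : ℝ | (fun y => (∑ i, Φ (x, y) i * μ i) + ν) ∈ LsetOf L}

/-- The function `ψ_ℓ(μ, ν, x)`. -/
def psiFn {X Y : Type*} [Fintype Y] {m : ℕ}
    (L : (Y → ℝ) → Y → EReal) (Φ : X × Y → Fin m → ℝ) (μ : Fin m → ℝ)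
    (ν : Y → ℝ) (x : X) : ℝ :=
  sSup {ρ : ℝ | (fun y => (∑ i, Φ (x, y) i * μ i) + ν y + ρ) ∈ LsetOf L}

/-- Empirical marginal of a sequence of training instances. -/
def empMarginal {X : Type*} [Fintype X] {n : ℕ} (xs : Fin n → X) (x : X) : ℝ :=
  (Finset.univ.filter fun j => xs j = x).card / n

/-- Uncertainty set with instances' marginal fixed to the empirical marginal. -/
def uncertaintyX {X Y : Type*} [Fintype X] [Fintype Y] {m n : ℕ}
    (Φ : X × Y → Fin m → ℝ) (a b : Fin m → ℝ) (xs : Fin n → X) : Set (X × Y → ℝ) :=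
  {p ∈ uncertainty Φ a b | ∀ x, (∑ y, p (x, y)) = empMarginal xs x}

/-- Uncertainty set with labels' marginal fixed to `p₀`. -/
def uncertaintyY {X Y : Type*} [Fintype X] [Fintype Y] {m : ℕ}
    (Φ : X × Y → Fin m → ℝ) (a b : Fin m → ℝ) (p₀ : Y → ℝ) : Set (X × Y → ℝ) :=
  {p ∈ uncertainty Φ a b | ∀ y, (∑ x, p (x, y)) = p₀ y}

/-- Uncertainty set with both marginals fixed. -/
def uncertaintyXY {X Y : Type*} [Fintype X] [Fintype Y] {m n : ℕ}
    (Φ : X × Y → Fin m → ℝ) (a b : Fin m → ℝ) (xs : Fin n → X) (p₀ : Y → ℝ) :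
    Set (X × Y → ℝ) :=
  {p ∈ uncertainty Φ a b |
    (∀ x, (∑ y, p (x, y)) = empMarginal xs x) ∧ ∀ y, (∑ x, p (x, y)) = p₀ y}

/-!
Everything except the bound on the risk of `hU` is immediate from the definitions; that bound
follows from the minimax inequality `inf_h sup_{p ∈ U} ℓ(h, p) ≤ sup_{p ∈ U} H_ℓ(p)`. To prove it,
fix a real `c > H_ℓ(U)` and suppose every rule has loss `> c` at some `p ∈ U`. The rules form a
compact set on which each `ℓ(·, p)` is lower semicontinuous, so finitely many `p₁, …, pₙ ∈ U`
already witness this. Separating the convex set of real vectors dominating some `(ℓ(h, pᵢ))ᵢ` from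
the orthant below `c` yields weights `w` with `Σ wᵢ ℓ(h, pᵢ) ≥ c' > H_ℓ(U)` for every rule `h`;
since `ℓ(h, ·)` is linear, `Σ wᵢ pᵢ ∈ U` has entropy at least `c'`, a contradiction.

Infinite losses need care. By convexity and lower semicontinuity, a score that is `⊥` somewhere on
the simplex is `⊥` everywhere, so a distribution charging such a label has loss `⊥` under every
rule and can be discarded, while the losses of the others are bounded below. That bound allows
giving every `pᵢ` a positive weight, so that rules with an infinite loss at some `pᵢ` still
satisfy `Σ wᵢ ℓ(h, pᵢ) ≥ c'`.
-/

open Filter Topology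

namespace EReal

variable {α ι : Type*}

theorem coe_finset_sum (s : Finset ι) (f : ι → ℝ) :
    ((∑ i ∈ s, f i : ℝ) : EReal) = ∑ i ∈ s, (f i : EReal) :=
  map_sum (⟨⟨Real.toEReal, coe_zero⟩, coe_add⟩ : ℝ →+ EReal) f s

theorem mul_finset_sum_of_nonneg_of_ne_top {a : EReal} (ha : 0 ≤ a) (ha' : a ≠ ⊤)
    (s : Finset ι) (f : ι → EReal) : a * ∑ i ∈ s, f i = ∑ i ∈ s, a * f i :=
  map_sum (⟨⟨(a * ·), mul_zero a⟩, left_distrib_of_nonneg_of_ne_top ha ha'⟩ : EReal →+ EReal) f s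

theorem coe_finset_sum_mul_of_nonneg {s : Finset ι} {a : ι → ℝ} (ha : ∀ i ∈ s, 0 ≤ a i)
    (x : EReal) : ((∑ i ∈ s, a i : ℝ) : EReal) * x = ∑ i ∈ s, (a i : EReal) * x := by
  classical
  induction s using Finset.induction_on with
  | empty => simp
  | insert j s hj ih =>
    rw [Finset.forall_mem_insert] at ha
    rw [Finset.sum_insert hj, Finset.sum_insert hj, coe_add, right_distrib_of_nonneg
      (EReal.coe_nonneg.2 ha.1) (EReal.coe_nonneg.2 (Finset.sum_nonneg ha.2)), ih ha.2]

theorem finset_sum_eq_top {s : Finset ι} {f : ι → EReal} (hf : ∀ i ∈ s, f i ≠ ⊥) {j : ι}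
    (hj : j ∈ s) (hfj : f j = ⊤) : ∑ i ∈ s, f i = ⊤ := by
  classical
  rw [← Finset.add_sum_erase s f hj, hfj]
  exact top_add_of_ne_bot (WithBot.sum_eq_bot_iff.not.2 fun ⟨i, hi, hfi⟩ =>
    hf i (Finset.mem_of_mem_erase hi) hfi)

variable [TopologicalSpace α]

theorem _root_.LowerSemicontinuous.ereal_add {f g : α → EReal} (hf : LowerSemicontinuous f)
    (hg : LowerSemicontinuous g) : LowerSemicontinuous (f + g) := by
  rw [lowerSemicontinuous_iff_le_liminf] at *
  exact fun x => (add_le_add (hf x) (hg x)).trans le_liminf_add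

theorem _root_.LowerSemicontinuous.ereal_const_mul {f : α → EReal} (hf : LowerSemicontinuous f)
    {a : EReal} (ha : 0 ≤ a) (ha' : a ≠ ⊤) : LowerSemicontinuous fun x => a * f x := by
  rw [lowerSemicontinuous_iff_le_liminf] at *
  intro x
  rw [liminf_const_mul_of_nonneg_of_ne_top ha ha']
  exact mul_le_mul_of_nonneg_left (hf x) ha

theorem lowerSemicontinuous_finset_sum {s : Finset ι} {f : ι → α → EReal}
    (hf : ∀ i ∈ s, LowerSemicontinuous (f i)) : LowerSemicontinuous fun x => ∑ i ∈ s, f i x := by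
  simpa only [Finset.sum_fn] using Finset.sum_induction f LowerSemicontinuous
    (fun _ _ => LowerSemicontinuous.ereal_add) lowerSemicontinuous_const hf

end EReal

theorem nonneg_of_forall_sum_mul_lt {ι : Type*} [Fintype ι] {μ : ι → ℝ} {c u : ℝ}
    (h : ∀ v : ι → ℝ, (∀ i, v i < c) → ∑ i, μ i * v i < u) (i : ι) : 0 ≤ μ i := by
  by_contra! hi
  set t := |u - (c - 1) * ∑ j, μ j| / -μ i
  have ht : t * μ i = -|u - (c - 1) * ∑ j, μ j| := by
    rw [div_mul_eq_mul_div, mul_div_assoc, div_neg, div_self hi.ne, mul_neg, mul_one]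
  have ht₀ : 0 ≤ t := div_nonneg (abs_nonneg _) (neg_nonneg.2 hi.le)
  have := h (fun j => c - 1 - if j = i then t else 0) fun j => by split_ifs <;> linarith
  simp only [mul_sub, Finset.sum_sub_distrib, mul_ite, mul_zero, Finset.sum_ite_eq',
    Finset.mem_univ, if_true, ← Finset.sum_mul] at this
  linarith [le_abs_self (u - (c - 1) * ∑ j, μ j)]

theorem mul_sum_le_of_forall_sum_mul_lt {ι : Type*} [Fintype ι] {μ : ι → ℝ} {c u : ℝ}
    (h : ∀ v : ι → ℝ, (∀ i, v i < c) → ∑ i, μ i * v i < u) : c * ∑ i, μ i ≤ u := by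
  have hlim : Tendsto (fun d => d * ∑ i, μ i) (𝓝[<] c) (𝓝 (c * ∑ i, μ i)) :=
    ((continuous_mul_const _).tendsto c).mono_left nhdsWithin_le_nhds
  refine le_of_tendsto hlim (eventually_nhdsWithin_of_forall fun d hd => ?_)
  have := h (fun _ => d) fun _ => hd
  rw [← Finset.sum_mul, mul_comm] at this
  exact this.le

theorem exists_mem_stdSimplex_forall_le_sum_mul {ι : Type*} [Fintype ι] [Nonempty ι]
    {S : Set (ι → ℝ)} (hS : Convex ℝ S) {c : ℝ} (hSc : ∀ v ∈ S, ∃ i, c < v i) :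
    ∃ w ∈ stdSimplex ℝ ι, ∀ v ∈ S, c ≤ ∑ i, w i * v i := by
  rcases S.eq_empty_or_nonempty with rfl | ⟨v₀, hv₀⟩
  · exact ⟨_, stdSimplex.barycenter.2, by simp⟩
  have hdisj : Disjoint (Set.univ.pi fun _ => Set.Iio c) S :=
    Set.disjoint_left.2 fun v hvC hvS =>
      let ⟨i, hi⟩ := hSc v hvS; (hvC i trivial).not_gt hi
  obtain ⟨φ, u, hφC, hφS⟩ := geometric_hahn_banach_open (convex_pi fun _ _ => convex_Iio c)
    (isOpen_set_pi Set.finite_univ fun _ _ => isOpen_Iio) hS hdisj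
  set μ : ι → ℝ := fun i => φ fun j => if i = j then 1 else 0
  have hφ : ∀ v, φ v = ∑ i, μ i * v i := fun v => by
    simp_rw [mul_comm (μ _)]
    exact (φ : (ι → ℝ) →ₗ[ℝ] ℝ).pi_apply_eq_sum_univ v
  have hμC : ∀ v : ι → ℝ, (∀ i, v i < c) → ∑ i, μ i * v i < u := fun v hv =>
    hφ v ▸ hφC v fun i _ => hv i
  have hμ := nonneg_of_forall_sum_mul_lt hμC
  have hs : 0 < ∑ i, μ i := by
    refine (Finset.sum_nonneg fun i _ => hμ i).lt_of_ne fun hs => ?_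
    have hμ0 : ∀ v : ι → ℝ, ∑ i, μ i * v i = 0 := fun v => Finset.sum_eq_zero fun i hi => by
      rw [(Finset.sum_eq_zero_iff_of_nonneg fun i _ => hμ i).1 hs.symm i hi, zero_mul]
    have := hμC (fun _ => c - 1) fun _ => by linarith
    linarith [hφS v₀ hv₀, hφ v₀, hμ0 v₀, hμ0 fun _ => c - 1]
  refine ⟨fun i => μ i / ∑ j, μ j, ⟨fun i => div_nonneg (hμ i) hs.le, ?_⟩, fun v hv => ?_⟩
  · rw [← Finset.sum_div, div_self hs.ne']
  · simp only [div_mul_eq_mul_div, ← Finset.sum_div, le_div_iff₀ hs]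
    linarith [mul_sum_le_of_forall_sum_mul_lt hμC, hφS v hv, hφ v]

/-- Mathlib's `ConvexOn` needs a module structure on the codomain, which `EReal` lacks. -/
def ERealConvexOn {E : Type*} [AddCommGroup E] [Module ℝ E] (s : Set E) (f : E → EReal) : Prop :=
  ∀ x y, x ∈ s → y ∈ s → ∀ t : ℝ, 0 ≤ t → t ≤ 1 →
    f (t • x + (1 - t) • y) ≤ (t : EReal) * f x + ((1 - t : ℝ) : EReal) * f y

namespace ERealConvexOn

variable {E ι : Type*} [AddCommGroup E] [Module ℝ E] {s : Set E}

theorem const_mul {f : E → EReal} (hf : ERealConvexOn s f) {a : ℝ} (ha : 0 ≤ a) :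
    ERealConvexOn s fun x => (a : EReal) * f x := fun x y hx hy t ht₀ ht₁ => by
  have ha' : (0 : EReal) ≤ a := EReal.coe_nonneg.2 ha
  calc (a : EReal) * f (t • x + (1 - t) • y)
      ≤ a * ((t : EReal) * f x + ((1 - t : ℝ) : EReal) * f y) :=
        mul_le_mul_of_nonneg_left (hf x y hx hy t ht₀ ht₁) ha'
    _ = t * (a * f x) + ((1 - t : ℝ) : EReal) * (a * f y) := by
        rw [EReal.left_distrib_of_nonneg_of_ne_top ha' (EReal.coe_ne_top a), mul_left_comm,
          mul_left_comm (a : EReal)]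

theorem finset_sum {u : Finset ι} {f : ι → E → EReal} (hf : ∀ i ∈ u, ERealConvexOn s (f i)) :
    ERealConvexOn s fun x => ∑ i ∈ u, f i x := fun x y hx hy t ht₀ ht₁ => by
  rw [EReal.mul_finset_sum_of_nonneg_of_ne_top (EReal.coe_nonneg.2 ht₀) (EReal.coe_ne_top t),
    EReal.mul_finset_sum_of_nonneg_of_ne_top (EReal.coe_nonneg.2 (sub_nonneg.2 ht₁))
      (EReal.coe_ne_top _), ← Finset.sum_add_distrib]
  exact Finset.sum_le_sum fun i hi => hf i hi x y hx hy t ht₀ ht₁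

theorem eq_bot_of_eq_bot [TopologicalSpace E] [IsTopologicalAddGroup E] [ContinuousSMul ℝ E]
    {f : E → EReal} (hf : ERealConvexOn s f) (hf' : LowerSemicontinuous f) {x₀ x : E}
    (hx₀ : x₀ ∈ s) (hfx₀ : f x₀ = ⊥) (hx : x ∈ s) : f x = ⊥ := by
  by_contra hfx
  have hpath : Tendsto (fun t : ℝ => t • x₀ + (1 - t) • x) (𝓝[>] 0) (𝓝 x) := by
    have : Continuous fun t : ℝ => t • x₀ + (1 - t) • x := by fun_prop
    simpa using (this.tendsto 0).mono_left nhdsWithin_le_nhds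
  obtain ⟨t, hft, ht⟩ := ((hpath.eventually (hf' x ⊥ (bot_lt_iff_ne_bot.2 hfx))).and
    (Ioc_mem_nhdsGT zero_lt_one)).exists
  have := hf x₀ x hx₀ hx t ht.1.le ht.2
  rw [hfx₀, EReal.coe_mul_bot_of_pos ht.1, EReal.bot_add] at this
  exact hft.ne' (le_bot_iff.1 this)

end ERealConvexOn

theorem convex_setOf_exists_forall_le {E ι : Type*} [AddCommGroup E] [Module ℝ E] {K : Set E}
    (hK : Convex ℝ K) {g : ι → E → EReal} (hg : ∀ i, ERealConvexOn K (g i)) :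
    Convex ℝ {v : ι → ℝ | ∃ x ∈ K, ∀ i, g i x ≤ v i} := by
  rintro v ⟨x, hx, hxv⟩ v' ⟨x', hx', hxv'⟩ a b ha hb hab
  obtain rfl : b = 1 - a := by linarith
  refine ⟨a • x + (1 - a) • x', hK hx hx' ha hb hab, fun i => ?_⟩
  calc g i (a • x + (1 - a) • x')
      ≤ a * g i x + ((1 - a : ℝ) : EReal) * g i x' := hg i x x' hx hx' a ha (by linarith)
    _ ≤ a * v i + ((1 - a : ℝ) : EReal) * v' i :=
      add_le_add (mul_le_mul_of_nonneg_left (hxv i) (EReal.coe_nonneg.2 ha))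
        (mul_le_mul_of_nonneg_left (hxv' i) (EReal.coe_nonneg.2 hb))
    _ = ((a • v + (1 - a) • v') i : ℝ) := by norm_cast

theorem exists_pos_mem_stdSimplex_forall_le_sum_mul {ι : Type*} [Fintype ι] [Nonempty ι]
    {l : ι → ℝ} (hl : l ∈ stdSimplex ℝ ι) {m c' c : ℝ} (hmc' : m < c') (hc' : c' < c) :
    ∃ w ∈ stdSimplex ℝ ι, (∀ i, 0 < w i) ∧
      ∀ v : ι → ℝ, (∀ i, m ≤ v i) → c ≤ ∑ i, l i * v i → c' ≤ ∑ i, w i * v i := by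
  -- mix `l` with the barycenter `b`, with `ε` chosen so that `(1 - ε) c + ε m = c'`
  set b := (stdSimplex.barycenter : stdSimplex ℝ ι).1
  set ε := (c - c') / (c - m)
  have hε₀ : 0 < ε := div_pos (by linarith) (by linarith)
  have hε₁ : ε < 1 := (div_lt_one (by linarith)).2 (by linarith)
  have hεcm : ε * (c - m) = c - c' := div_mul_cancel₀ _ (by linarith)
  refine ⟨(1 - ε) • l + ε • b,
    convex_stdSimplex ℝ ι hl stdSimplex.barycenter.2 (by linarith) hε₀.le (by ring),
    fun i => add_pos_of_nonneg_of_pos (mul_nonneg (by linarith) (hl.1 i))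
      (mul_pos hε₀ (by simp [b, Fintype.card_pos])), fun v hvm hlv => ?_⟩
  have hbv : m ≤ ∑ i, b i * v i :=
    calc m = ∑ i, b i * m := by rw [← Finset.sum_mul, stdSimplex.barycenter.2.2, one_mul]
      _ ≤ ∑ i, b i * v i := Finset.sum_le_sum fun i _ =>
        mul_le_mul_of_nonneg_left (hvm i) (stdSimplex.barycenter.2.1 i)
  calc c' = (1 - ε) * c + ε * m := by linarith
    _ ≤ (1 - ε) * ∑ i, l i * v i + ε * ∑ i, b i * v i := by gcongr
    _ = ∑ i, ((1 - ε) • l + ε • b) i * v i := by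
      simp only [Pi.add_apply, Pi.smul_apply, smul_eq_mul, add_mul, Finset.sum_add_distrib,
        Finset.mul_sum, mul_assoc]

theorem exists_mem_stdSimplex_forall_coe_le_sum_mul {E ι : Type*} [AddCommGroup E] [Module ℝ E]
    [Fintype ι] [Nonempty ι] {K : Set E} (hK : Convex ℝ K) {g : ι → E → EReal}
    (hg : ∀ i, ERealConvexOn K (g i)) {m : ℝ} (hm : ∀ i, ∀ x ∈ K, (m : EReal) ≤ g i x)
    {c : ℝ} (hc : ∀ x ∈ K, ∃ i, (c : EReal) < g i x) {c' : ℝ} (hc' : c' < c) :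
    ∃ w ∈ stdSimplex ℝ ι, ∀ x ∈ K, (c' : EReal) ≤ ∑ i, (w i : EReal) * g i x := by
  obtain ⟨m, hmc', hm⟩ : ∃ m < c', ∀ i, ∀ x ∈ K, (m : EReal) ≤ g i x :=
    ⟨min m c' - 1, by linarith [min_le_right m c'], fun i x hx =>
      (EReal.coe_le_coe_iff.2 (by linarith [min_le_left m c'])).trans (hm i x hx)⟩
  obtain ⟨l, hl, hlS⟩ := exists_mem_stdSimplex_forall_le_sum_mul
    (convex_setOf_exists_forall_le hK hg) fun v ⟨x, hx, hxv⟩ =>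
      (hc x hx).imp fun i hi => EReal.coe_lt_coe_iff.1 (hi.trans_le (hxv i))
  obtain ⟨w, hw, hwpos, hwv⟩ := exists_pos_mem_stdSimplex_forall_le_sum_mul hl hmc' hc'
  refine ⟨w, hw, fun x hx => ?_⟩
  have hbot : ∀ i, g i x ≠ ⊥ := fun i => ne_bot_of_le_ne_bot (EReal.coe_ne_bot m) (hm i x hx)
  by_cases htop : ∃ i, g i x = ⊤
  · obtain ⟨j, hj⟩ := htop
    rw [EReal.finset_sum_eq_top (fun i _ => ?_) (Finset.mem_univ j)
      (by rw [hj, EReal.coe_mul_top_of_pos (hwpos j)])]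
    · exact le_top
    · exact (EReal.mul_ne_bot _ _).2 ⟨.inl (EReal.coe_ne_bot _), .inr (hbot i),
        .inl (EReal.coe_ne_top _), .inl (EReal.coe_nonneg.2 (hwpos i).le)⟩
  push Not at htop
  set v : ι → ℝ := fun i => (g i x).toReal
  have hv : ∀ i, g i x = v i := fun i => (EReal.coe_toReal (htop i) (hbot i)).symm
  simp_rw [hv, ← EReal.coe_mul, ← EReal.coe_finset_sum, EReal.coe_le_coe_iff]
  exact hwv v (fun i => EReal.coe_le_coe_iff.1 ((hm i x hx).trans_eq (hv i)))
    (hlS v ⟨x, hx, fun i => (hv i).le⟩)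

theorem IsCompact.exists_forall_coe_le_of_ne_bot {α : Type*} [TopologicalSpace α] {K : Set α}
    (hK : IsCompact K) {f : α → EReal} (hf : LowerSemicontinuousOn f K)
    (hne : ∀ x ∈ K, f x ≠ ⊥) : ∃ m : ℝ, ∀ x ∈ K, (m : EReal) ≤ f x := by
  rcases K.eq_empty_or_nonempty with rfl | hK₀
  · exact ⟨0, by simp⟩
  obtain ⟨x₀, hx₀, hmin⟩ := hf.exists_isMinOn hK₀ hK
  obtain ⟨m, -, hm⟩ := EReal.exists_between_coe_real (bot_lt_iff_ne_bot.2 (hne x₀ hx₀))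
  exact ⟨m, fun x hx => hm.le.trans (hmin hx)⟩

theorem isCompact_probSimplex (Z : Type*) [Fintype Z] : IsCompact (probSimplex Z) :=
  isCompact_stdSimplex ℝ Z

theorem ruleSet_eq_pi (X Y : Type*) [Fintype Y] :
    ruleSet X Y = Set.univ.pi fun _ => probSimplex Y := by
  ext h
  simp [ruleSet, Set.mem_pi]

theorem isCompact_ruleSet (X Y : Type*) [Fintype Y] : IsCompact (ruleSet X Y) :=
  ruleSet_eq_pi X Y ▸ isCompact_univ_pi fun _ => isCompact_probSimplex Y

theorem convex_ruleSet (X Y : Type*) [Fintype Y] : Convex ℝ (ruleSet X Y) :=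
  ruleSet_eq_pi X Y ▸ convex_pi fun _ _ => convex_stdSimplex ℝ Y

section Classification

variable {X Y : Type*} [Fintype X] [Fintype Y] {L : (Y → ℝ) → Y → EReal}

theorem ConvexInFirst.erealConvexOn (hL : ConvexInFirst L) (y : Y) :
    ERealConvexOn (probSimplex Y) fun q => L q y :=
  hL y

theorem lowerSemicontinuous_expLoss (hL : ∀ y, LowerSemicontinuous fun q : Y → ℝ => L q y)
    {p : X × Y → ℝ} (hp : ∀ z, 0 ≤ p z) : LowerSemicontinuous fun h : X → Y → ℝ => expLoss L h p :=
  EReal.lowerSemicontinuous_finset_sum fun z _ =>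
    ((hL z.2).comp (continuous_apply z.1)).ereal_const_mul (EReal.coe_nonneg.2 (hp z))
      (EReal.coe_ne_top _)

theorem erealConvexOn_expLoss (hL : ConvexInFirst L) {p : X × Y → ℝ} (hp : ∀ z, 0 ≤ p z) :
    ERealConvexOn (ruleSet X Y) fun h => expLoss L h p :=
  ERealConvexOn.finset_sum fun z _ =>
    ERealConvexOn.const_mul (s := ruleSet X Y) (f := fun h : X → Y → ℝ => L (h z.1) z.2)
      (fun _ _ hh₁ hh₂ => hL.erealConvexOn z.2 _ _ (hh₁ z.1) (hh₂ z.1)) (hp z)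

theorem expLoss_finset_sum_smul {ι : Type*} {s : Finset ι} {w : ι → ℝ} (hw : ∀ i ∈ s, 0 ≤ w i)
    {P : ι → X × Y → ℝ} (hP : ∀ i ∈ s, ∀ z, 0 ≤ P i z) (h : X → Y → ℝ) :
    expLoss L h (∑ i ∈ s, w i • P i) = ∑ i ∈ s, (w i : EReal) * expLoss L h (P i) := by
  calc expLoss L h (∑ i ∈ s, w i • P i)
      = ∑ z, ∑ i ∈ s, ((w i * P i z : ℝ) : EReal) * L (h z.1) z.2 := by
        refine Finset.sum_congr rfl fun z _ => ?_
        rw [← EReal.coe_finset_sum_mul_of_nonneg fun i hi => mul_nonneg (hw i hi) (hP i hi z)]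
        simp
    _ = ∑ i ∈ s, (w i : EReal) * expLoss L h (P i) := by
        rw [Finset.sum_comm]
        refine Finset.sum_congr rfl fun i hi => ?_
        rw [expLoss, EReal.mul_finset_sum_of_nonneg_of_ne_top (EReal.coe_nonneg.2 (hw i hi))
          (EReal.coe_ne_top _)]
        simp only [EReal.coe_mul, mul_assoc]

theorem expLoss_eq_bot {p : X × Y → ℝ} (hp : ∀ z, 0 ≤ p z) {z : X × Y} (hz : p z ≠ 0)
    {h : X → Y → ℝ} (hbot : L (h z.1) z.2 = ⊥) : expLoss L h p = ⊥ :=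
  WithBot.sum_eq_bot_iff.2 ⟨z, Finset.mem_univ z, by
    rw [hbot]; exact EReal.coe_mul_bot_of_pos ((hp z).lt_of_ne' hz)⟩

theorem coe_le_expLoss {p : X × Y → ℝ} (hp : p ∈ probSimplex (X × Y)) {h : X → Y → ℝ} {m : ℝ}
    (hm : ∀ z, p z ≠ 0 → (m : EReal) ≤ L (h z.1) z.2) : (m : EReal) ≤ expLoss L h p :=
  calc (m : EReal) = ∑ z, ((p z * m : ℝ) : EReal) := by
        rw [← EReal.coe_finset_sum, ← Finset.sum_mul, hp.2, one_mul]
    _ ≤ expLoss L h p := Finset.sum_le_sum fun z _ => by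
        rcases eq_or_ne (p z) 0 with hz | hz
        · simp [hz]
        · rw [EReal.coe_mul]
          exact mul_le_mul_of_nonneg_left (hm z hz) (EReal.coe_nonneg.2 (hp.1 z))

theorem exists_forall_coe_le_score (hLlsc : ∀ y, LowerSemicontinuous fun q : Y → ℝ => L q y)
    (hLconv : ConvexInFirst L) :
    ∃ m : ℝ, ∀ y, ∀ q ∈ probSimplex Y, L q y ≠ ⊥ → (m : EReal) ≤ L q y := by
  have : ∀ y, ∃ m : ℝ, ∀ q ∈ probSimplex Y, L q y ≠ ⊥ → (m : EReal) ≤ L q y := fun y => by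
    by_cases hbot : ∃ q₀ ∈ probSimplex Y, L q₀ y = ⊥
    · obtain ⟨q₀, hq₀, hLq₀⟩ := hbot
      exact ⟨0, fun q hq hne =>
        absurd ((hLconv.erealConvexOn y).eq_bot_of_eq_bot (hLlsc y) hq₀ hLq₀ hq) hne⟩
    · push Not at hbot
      obtain ⟨m, hm⟩ := (isCompact_probSimplex Y).exists_forall_coe_le_of_ne_bot
        ((hLlsc y).lowerSemicontinuousOn _) hbot
      exact ⟨m, fun q hq _ => hm q hq⟩
  choose m hm using this
  obtain ⟨M, hM⟩ := Finite.exists_ge m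
  exact ⟨M, fun y q hq hne => (EReal.coe_le_coe_iff.2 (hM y)).trans (hm y q hq hne)⟩

theorem exists_forall_expLoss_eq_bot_or_coe_le
    (hLlsc : ∀ y, LowerSemicontinuous fun q : Y → ℝ => L q y) (hLconv : ConvexInFirst L) :
    ∃ m : ℝ, ∀ p ∈ probSimplex (X × Y), (∀ h ∈ ruleSet X Y, expLoss L h p = ⊥) ∨
      ∀ h ∈ ruleSet X Y, (m : EReal) ≤ expLoss L h p := by
  obtain ⟨m, hm⟩ := exists_forall_coe_le_score hLlsc hLconv
  refine ⟨m, fun p hp => ?_⟩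
  by_cases hbot : ∃ z, p z ≠ 0 ∧ ∃ q ∈ probSimplex Y, L q z.2 = ⊥
  · obtain ⟨z, hz, q, hq, hLq⟩ := hbot
    exact .inl fun h hh => expLoss_eq_bot hp.1 hz
      ((hLconv.erealConvexOn z.2).eq_bot_of_eq_bot (hLlsc z.2) hq hLq (hh z.1))
  · push Not at hbot
    exact .inr fun h hh => coe_le_expLoss hp fun z hz => hm z.2 _ (hh z.1) (hbot z hz _ (hh z.1))

theorem exists_mem_ruleSet_forall_expLoss_le
    (hLlsc : ∀ y, LowerSemicontinuous fun q : Y → ℝ => L q y) (hLconv : ConvexInFirst L)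
    {U : Set (X × Y → ℝ)} (hUsub : U ⊆ probSimplex (X × Y)) (hUconv : Convex ℝ U)
    (hrule : (ruleSet X Y).Nonempty) {c : ℝ} (hc : maxEntropy L U < c) :
    ∃ h ∈ ruleSet X Y, ∀ p ∈ U, expLoss L h p ≤ c := by
  obtain ⟨m, hm⟩ := exists_forall_expLoss_eq_bot_or_coe_le (X := X) hLlsc hLconv
  -- the other distributions in `U` have loss `⊥` under every rule
  set U' := {p ∈ U | ∀ h ∈ ruleSet X Y, (m : EReal) ≤ expLoss L h p}
  by_contra! hfar
  have hcover : ruleSet X Y ⊆ ⋃ p ∈ U', {h | (c : EReal) < expLoss L h p} := fun h hh => by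
    obtain ⟨p, hp, hcp⟩ := hfar h hh
    refine Set.mem_biUnion ⟨hp, (hm p (hUsub hp)).resolve_left fun hbot => ?_⟩ hcp
    exact (hbot h hh ▸ hcp).not_ge bot_le
  obtain ⟨t, htU', htfin, htcover⟩ := (isCompact_ruleSet X Y).elim_finite_subcover_image
    (fun p hp => (lowerSemicontinuous_expLoss hLlsc (hUsub hp.1).1).isOpen_preimage _) hcover
  have := htfin.fintype
  have : Nonempty t :=
    let ⟨h, hh⟩ := hrule
    let ⟨p, hp, _⟩ := Set.mem_iUnion₂.1 (htcover hh)
    ⟨⟨p, hp⟩⟩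
  obtain ⟨c', hmax, hc'⟩ := EReal.exists_between_coe_real hc
  obtain ⟨w, hw, hwc⟩ := exists_mem_stdSimplex_forall_coe_le_sum_mul (convex_ruleSet X Y)
    (g := fun (p : t) h => expLoss L h p)
    (fun p => erealConvexOn_expLoss hLconv (hUsub (htU' p.2).1).1)
    (fun p => (htU' p.2).2)
    (fun h hh => let ⟨p, hp, hcp⟩ := Set.mem_iUnion₂.1 (htcover hh); ⟨⟨p, hp⟩, hcp⟩)
    (EReal.coe_lt_coe_iff.1 hc')
  set q := ∑ p : t, w p • (p : X × Y → ℝ)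
  have hqU : q ∈ U := hUconv.sum_mem (fun p _ => hw.1 p) hw.2 fun p _ => (htU' p.2).1
  have hq : (c' : EReal) ≤ entropyFn L q := le_iInf₂ fun h hh => (hwc h hh).trans_eq
    (expLoss_finset_sum_smul (fun p _ => hw.1 p) (fun p _ => (hUsub (htU' p.2).1).1) h).symm
  exact (hq.trans (le_iSup₂ (f := fun p _ => entropyFn L p) q hqU)).not_gt hmax

theorem iInf_iSup_expLoss_le_maxEntropy
    (hLlsc : ∀ y, LowerSemicontinuous fun q : Y → ℝ => L q y) (hLconv : ConvexInFirst L)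
    {U : Set (X × Y → ℝ)} (hUsub : U ⊆ probSimplex (X × Y)) (hUconv : Convex ℝ U)
    (hrule : (ruleSet X Y).Nonempty) :
    ⨅ h ∈ ruleSet X Y, ⨆ p ∈ U, expLoss L h p ≤ maxEntropy L U :=
  EReal.le_of_forall_lt_iff_le.1 fun _ hc =>
    let ⟨h, hh, hhc⟩ := exists_mem_ruleSet_forall_expLoss_le hLlsc hLconv hUsub hUconv hrule hc
    iInf₂_le_of_le h hh (iSup₂_le hhc)

end Classification

theorem statement1_general {X Y : Type*} [Fintype X] [Fintype Y]
    (L : (Y → ℝ) → Y → EReal)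
    (hLlsc : ∀ y, LowerSemicontinuous fun q : Y → ℝ => L q y)
    (hLconv : ConvexInFirst L)
    (U : Set (X × Y → ℝ)) (hUsub : U ⊆ probSimplex (X × Y))
    (hUconv : Convex ℝ U)
    (hU : X → Y → ℝ) (hUrule : hU ∈ ruleSet X Y)
    (hUmin : ∀ h ∈ ruleSet X Y,
      (⨆ p ∈ U, expLoss L hU p) ≤ ⨆ p ∈ U, expLoss L h p)
    (pstar : X × Y → ℝ) (hpstar : pstar ∈ U) :
    entropyFn L pstar ≤ maxEntropy L U ∧
    expLoss L hU pstar ≤ maxEntropy L U ∧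
    ((∀ p ∈ U, entropyFn L p ≤ entropyFn L pstar) →
      entropyFn L pstar = maxEntropy L U ∧
      expLoss L hU pstar = maxEntropy L U) := by
  have hBayes : entropyFn L pstar ≤ maxEntropy L U := le_iSup₂_of_le pstar hpstar le_rfl
  have hMRC : expLoss L hU pstar ≤ maxEntropy L U :=
    calc expLoss L hU pstar
        ≤ ⨆ p ∈ U, expLoss L hU p := le_iSup₂_of_le pstar hpstar le_rfl
      _ ≤ ⨅ h ∈ ruleSet X Y, ⨆ p ∈ U, expLoss L h p := le_iInf₂ hUmin
      _ ≤ maxEntropy L U :=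
        iInf_iSup_expLoss_le_maxEntropy hLlsc hLconv hUsub hUconv ⟨hU, hUrule⟩
  refine ⟨hBayes, hMRC, fun hmax => ?_⟩
  have hEq : entropyFn L pstar = maxEntropy L U := le_antisymm hBayes (iSup₂_le hmax)
  exact ⟨hEq, le_antisymm hMRC (hEq ▸ iInf₂_le hU hUrule)⟩

/-- maximum entropy upper bounds the Bayes risk and the MRC risk
when the true distribution belongs to the uncertainty set. -/
theorem statement1 {X Y : Type*} [Fintype X] [Fintype Y] [Nonempty X] [Nonempty Y]
    (L : (Y → ℝ) → Y → EReal)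
    (hLlsc : ∀ y, LowerSemicontinuous fun q : Y → ℝ => L q y)
    (hLconv : ConvexInFirst L)
    (U : Set (X × Y → ℝ)) (hUsub : U ⊆ probSimplex (X × Y))
    (hUconv : Convex ℝ U) (hUcomp : IsCompact U)
    (hU : X → Y → ℝ) (hUrule : hU ∈ ruleSet X Y)
    (hUmin : ∀ h ∈ ruleSet X Y,
      (⨆ p ∈ U, expLoss L hU p) ≤ ⨆ p ∈ U, expLoss L h p)
    (pstar : X × Y → ℝ) (hpstar : pstar ∈ U) :
    entropyFn L pstar ≤ maxEntropy L U ∧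
    expLoss L hU pstar ≤ maxEntropy L U ∧
    ((∀ p ∈ U, entropyFn L p ≤ entropyFn L pstar) →
      entropyFn L pstar = maxEntropy L U ∧
      expLoss L hU pstar = maxEntropy L U) :=
  statement1_general L hLlsc hLconv U hUsub hUconv hU hUrule hUmin pstar hpstar
end
end

section
/- For a finite nonempty set Y and c : Y → ℝ, there exists q ∈ Δ(Y) with c(y) + 1 − q(y) ≤ 0 for all y ∈ Y if and only if Σ_{y∈Y} (c(y) + 1)_+ ≤ 1, where (t)_+ = max(t,0). Consequently, for the 0-1 loss with score L(q,y) = 1 − q(y), the constraint (y ↦ Φ(x,y)ᵀμ + ν) ∈ 𝓛 is equivalent to Σ_{y∈Y} (Φ(x,y)ᵀμ + ν + 1)_+ ≤ 1. -/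
open scoped BigOperators Classical

noncomputable section

/-!
A distribution `q` dominating `c` forces `∑ c⁺ ≤ ∑ q = 1`. Conversely, when `∑ c⁺ ≤ 1`, adding to
`c⁺` an equal share of the slack `1 - ∑ c⁺` at every point gives a distribution dominating `c`.
For the 0-1 score, `c ∈ 𝓛` says exactly that `c + 1` is dominated by a distribution.
-/

section

variable {Y : Type*} [Fintype Y]

theorem sum_max_zero_le_one_of_le_mem_probSimplex {c q : Y → ℝ}
    (hq : q ∈ probSimplex Y) (hcq : ∀ y, c y ≤ q y) : ∑ y, max (c y) 0 ≤ 1 :=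
  hq.2 ▸ Finset.sum_le_sum fun y _ => max_le (hcq y) (hq.1 y)

def posPartSpread (c : Y → ℝ) : Y → ℝ :=
  fun y => max (c y) 0 + (1 - ∑ z, max (c z) 0) / Fintype.card Y

theorem max_zero_le_posPartSpread {c : Y → ℝ} (hc : ∑ y, max (c y) 0 ≤ 1) (y : Y) :
    max (c y) 0 ≤ posPartSpread c y :=
  le_add_of_nonneg_right (div_nonneg (sub_nonneg.mpr hc) (Nat.cast_nonneg _))

theorem le_posPartSpread {c : Y → ℝ} (hc : ∑ y, max (c y) 0 ≤ 1) (y : Y) :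
    c y ≤ posPartSpread c y :=
  (le_max_left _ _).trans (max_zero_le_posPartSpread hc y)

theorem posPartSpread_mem_probSimplex [Nonempty Y] {c : Y → ℝ}
    (hc : ∑ y, max (c y) 0 ≤ 1) : posPartSpread c ∈ probSimplex Y := by
  refine ⟨fun y => (le_max_right _ _).trans (max_zero_le_posPartSpread hc y), ?_⟩
  have hcard : (Fintype.card Y : ℝ) ≠ 0 := Nat.cast_ne_zero.mpr Fintype.card_ne_zero
  simp only [posPartSpread, Finset.sum_add_distrib, Finset.sum_const, Finset.card_univ,
    nsmul_eq_mul]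
  field_simp
  ring

theorem exists_mem_probSimplex_forall_le_iff [Nonempty Y] (c : Y → ℝ) :
    (∃ q ∈ probSimplex Y, ∀ y, c y ≤ q y) ↔ ∑ y, max (c y) 0 ≤ 1 :=
  ⟨fun ⟨_, hq, hcq⟩ => sum_max_zero_le_one_of_le_mem_probSimplex hq hcq,
    fun hc => ⟨posPartSpread c, posPartSpread_mem_probSimplex hc, le_posPartSpread hc⟩⟩

theorem exists_mem_probSimplex_add_one_sub_nonpos_iff [Nonempty Y] (c : Y → ℝ) :
    (∃ q ∈ probSimplex Y, ∀ y, c y + 1 - q y ≤ 0) ↔ ∑ y, max (c y + 1) 0 ≤ 1 := by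
  simp only [sub_nonpos]
  exact exists_mem_probSimplex_forall_le_iff _

theorem mem_LsetOf_zeroOne_iff (c : Y → ℝ) :
    c ∈ LsetOf (fun (q : Y → ℝ) (y : Y) => ((1 - q y : ℝ) : EReal)) ↔
      ∃ q ∈ probSimplex Y, ∀ y, c y + 1 - q y ≤ 0 := by
  simp only [LsetOf, Set.mem_ofPred_eq, ← EReal.coe_add, EReal.coe_nonpos, add_sub_assoc]

end

/-- characterization of the feasibility set `𝓛` for the 0-1 loss. -/
theorem statement11 {X Y : Type*} [Fintype Y] [Nonempty Y]
    {m : ℕ} (Φ : X × Y → Fin m → ℝ) :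
    (∀ c : Y → ℝ,
      (∃ q ∈ probSimplex Y, ∀ y, c y + 1 - q y ≤ 0) ↔
        ∑ y, max (c y + 1) 0 ≤ 1) ∧
    (∀ (x : X) (μ : Fin m → ℝ) (ν : ℝ),
      ((fun y => (∑ i, Φ (x, y) i * μ i) + ν) ∈
          LsetOf fun (q : Y → ℝ) (y : Y) => ((1 - q y : ℝ) : EReal)) ↔
        ∑ y, max ((∑ i, Φ (x, y) i * μ i) + ν + 1) 0 ≤ 1) :=
  ⟨exists_mem_probSimplex_add_one_sub_nonpos_iff, fun _ _ _ =>
    (mem_LsetOf_zeroOne_iff _).trans (exists_mem_probSimplex_add_one_sub_nonpos_iff _)⟩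
end
end

section
/- For a finite nonempty set Y and v : Y → ℝ, sup{ν ∈ ℝ : Σ_{y∈Y} exp(v(y) + ν) ≤ 1} = −log Σ_{y∈Y} exp(v(y)), and the supremum is attained. Consequently, for the log-loss with score L(q,y) = −log q(y) (with value +∞ when q(y) = 0), the function φ_log(μ,x) = sup{ν ∈ ℝ : (y ↦ Φ(x,y)ᵀμ + ν) ∈ 𝓛} satisfies φ_log(μ,x) = −log Σ_{y∈Y} exp(Φ(x,y)ᵀμ); moreover, if a classification rule h satisfies h(y|x) ≥ exp(Φ(x,y)ᵀμ + φ_log(μ,x)) for all y ∈ Y, then equality holds, i.e., h(y|x) = exp(Φ(x,y)ᵀμ)/Σ_{i∈Y} exp(Φ(x,i)ᵀμ). -/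
open scoped BigOperators Classical

noncomputable section

/-!
Since `∑ y, exp (v y + ν) = exp (ν + log ∑ y, exp (v y))`, the constraint set is the half-line
`ν ≤ -log ∑ y, exp (v y)`. For the log-loss, `c + L(q, ·) ≤ 0` says exactly `exp ∘ c ≤ q`, so
`c ∈ 𝓛` iff `exp ∘ c` is dominated by a distribution, i.e. iff `∑ y, exp (c y) ≤ 1`; hence `φ_log`
is the endpoint of that half-line. Finally, a distribution dominating the softmax distribution
pointwise equals it, as both sum to one.
-/

open Real

def logScore (Y : Type*) : (Y → ℝ) → Y → EReal :=
  fun q y => if q y = 0 then ⊤ else ((-log (q y) : ℝ) : EReal)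

theorem coe_add_logScore_nonpos_iff {Y : Type*} {q : Y → ℝ} {y : Y} (hq : 0 ≤ q y) (c : ℝ) :
    (c : EReal) + logScore Y q y ≤ 0 ↔ exp c ≤ q y := by
  rcases hq.eq_or_lt with hzero | hpos
  · simp [logScore, ← hzero, (exp_pos c).not_ge]
  · rw [logScore, if_neg hpos.ne', ← EReal.coe_add, EReal.coe_nonpos, ← le_log_iff_exp_le hpos]
    exact sub_nonpos

section

variable {Y : Type*} [Fintype Y]

theorem exists_mem_probSimplex_le_iff [Nonempty Y] {f : Y → ℝ} (hf : 0 ≤ f) :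
    (∃ q ∈ probSimplex Y, f ≤ q) ↔ ∑ y, f y ≤ 1 := by
  constructor
  · rintro ⟨q, ⟨-, hq_sum⟩, hfq⟩
    exact hq_sum ▸ Finset.sum_le_sum fun y _ => hfq y
  · intro hsum
    -- spread the missing mass `1 - ∑ f` uniformly over `Y`
    set slack := (1 - ∑ y, f y) / Fintype.card Y
    have hslack : 0 ≤ slack := div_nonneg (by linarith) (Nat.cast_nonneg _)
    refine ⟨f + fun _ => slack, ⟨fun y => add_nonneg (hf y) hslack, ?_⟩,
      le_add_of_nonneg_right fun _ => hslack⟩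
    simp only [Pi.add_apply, Finset.sum_add_distrib, Finset.sum_const, Finset.card_univ,
      nsmul_eq_mul, slack]
    field_simp
    ring

theorem mem_LsetOf_logScore_iff [Nonempty Y] (c : Y → ℝ) :
    c ∈ LsetOf (logScore Y) ↔ ∑ y, exp (c y) ≤ 1 := by
  rw [← exists_mem_probSimplex_le_iff fun y => (exp_pos (c y)).le]
  refine exists_congr fun q => and_congr_right fun hq => ?_
  exact forall_congr' fun y => coe_add_logScore_nonpos_iff (hq.1 y) (c y)

theorem sum_exp_pos [Nonempty Y] (v : Y → ℝ) : 0 < ∑ y, exp (v y) :=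
  Finset.sum_pos (fun _ _ => exp_pos _) Finset.univ_nonempty

theorem sum_exp_add_eq_exp_add_log_sum_exp [Nonempty Y] (v : Y → ℝ) (ν : ℝ) :
    ∑ y, exp (v y + ν) = exp (ν + log (∑ y, exp (v y))) := by
  simp_rw [exp_add, exp_log (sum_exp_pos v), ← Finset.sum_mul, mul_comm]

theorem setOf_sum_exp_add_le_one_eq_Iic [Nonempty Y] (v : Y → ℝ) :
    {ν : ℝ | ∑ y, exp (v y + ν) ≤ 1} = Set.Iic (-log (∑ y, exp (v y))) := by
  ext ν
  rw [Set.mem_ofPred_eq, sum_exp_add_eq_exp_add_log_sum_exp, exp_le_one_iff, Set.mem_Iic,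
    le_neg_iff_add_nonpos_right]

theorem phiFn_logScore [Nonempty Y] {X : Type*} {m : ℕ} (Φ : X × Y → Fin m → ℝ)
    (x : X) (μ : Fin m → ℝ) :
    phiFn (logScore Y) Φ μ x = -log (∑ y, exp (∑ i, Φ (x, y) i * μ i)) := by
  simp_rw [phiFn, mem_LsetOf_logScore_iff]
  rw [setOf_sum_exp_add_le_one_eq_Iic (fun y => ∑ i, Φ (x, y) i * μ i), csSup_Iic]

theorem exp_add_neg_log_sum_exp [Nonempty Y] (v : Y → ℝ) (y : Y) :
    exp (v y + -log (∑ y', exp (v y'))) = exp (v y) / ∑ y', exp (v y') := by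
  rw [exp_add, exp_neg, exp_log (sum_exp_pos v), div_eq_mul_inv]

theorem eq_softmax_of_softmax_le [Nonempty Y] (v : Y → ℝ) {q : Y → ℝ} (hq : q ∈ probSimplex Y)
    (hle : ∀ y, exp (v y) / ∑ y', exp (v y') ≤ q y) (y : Y) :
    q y = exp (v y) / ∑ y', exp (v y') := by
  have hsum : ∑ y, exp (v y) / ∑ y', exp (v y') = ∑ y, q y := by
    rw [← Finset.sum_div, div_self (sum_exp_pos v).ne', hq.2]
  exact ((Finset.sum_eq_sum_iff_of_le fun y _ => hle y).1 hsum y (Finset.mem_univ y)).symm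

end

/-- closed form of `φ` for the log-loss, and the resulting
softmax form of the MRC. -/
theorem statement19 {X Y : Type*} [Fintype Y] [Nonempty Y]
    {m : ℕ} (Φ : X × Y → Fin m → ℝ) :
    (∀ v : Y → ℝ,
      sSup {ν : ℝ | ∑ y, Real.exp (v y + ν) ≤ 1} =
          -Real.log (∑ y, Real.exp (v y)) ∧
        (-Real.log (∑ y, Real.exp (v y))) ∈
          {ν : ℝ | ∑ y, Real.exp (v y + ν) ≤ 1}) ∧
    (∀ (x : X) (μ : Fin m → ℝ),
      phiFn (fun (q : Y → ℝ) (y : Y) =>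
          if q y = 0 then (⊤ : EReal) else ((-Real.log (q y) : ℝ) : EReal)) Φ μ x =
        -Real.log (∑ y, Real.exp (∑ i, Φ (x, y) i * μ i))) ∧
    (∀ (x : X) (μ : Fin m → ℝ) (h : X → Y → ℝ), (∀ x', h x' ∈ probSimplex Y) →
      (∀ y, Real.exp ((∑ i, Φ (x, y) i * μ i) +
          phiFn (fun (q : Y → ℝ) (y' : Y) =>
            if q y' = 0 then (⊤ : EReal) else ((-Real.log (q y') : ℝ) : EReal)) Φ μ x) ≤
        h x y) →
      ∀ y, h x y =
        Real.exp (∑ i, Φ (x, y) i * μ i) /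
          ∑ y', Real.exp (∑ i, Φ (x, y') i * μ i)) := by
  have hφ := phiFn_logScore (Y := Y) Φ
  refine ⟨fun v => ?_, hφ, fun x μ h hh hge => ?_⟩
  · rw [setOf_sum_exp_add_le_one_eq_Iic]
    exact ⟨csSup_Iic, Set.self_mem_Iic⟩
  · refine eq_softmax_of_softmax_le (fun y => ∑ i, Φ (x, y) i * μ i) (hh x) fun y => ?_
    calc exp (∑ i, Φ (x, y) i * μ i) / ∑ y', exp (∑ i, Φ (x, y') i * μ i)
        = exp (∑ i, Φ (x, y) i * μ i + phiFn (logScore Y) Φ μ x) := by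
          rw [hφ, exp_add_neg_log_sum_exp (fun y => ∑ i, Φ (x, y) i * μ i)]
      _ ≤ h x y := hge y
end
end
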